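/- Fix θ ∈ (−π/4, π/4) with θ ≠ 0. The Lie algebra s = s(θ) is not isomorphic, as a complex Lie algebra, to the Heisenberg Lie algebra h(2). -/

import Mathlib

noncomputable section

/-!
The Lie algebra `s(θ)` of the Swanson model: the 5-dimensional complex Lie algebra
with basis `v₁, v₂, v₃, v₄, v` and brackets `[v₁,v₂] = [v₃,v₄] = v`,
`[v₁,v₄] = [v₃,v₂] = cos(2θ)·v`, `[v₁,v₃] = [v₄,v₂] = −i·sin(2θ)·v`, `[v,vⱼ] = 0`.
-/

/-- The underlying vector space of the Swanson Lie algebra `s(θ)`: a pair consisting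
of the coordinates along `v₁, v₂, v₃, v₄` and the coordinate along `v`. -/
def SwAlg (_θ : ℝ) : Type := (Fin 4 → ℂ) × ℂ

namespace SwAlg

variable {θ : ℝ}

instance : AddCommGroup (SwAlg θ) := inferInstanceAs (AddCommGroup ((Fin 4 → ℂ) × ℂ))
instance : Module ℂ (SwAlg θ) := inferInstanceAs (Module ℂ ((Fin 4 → ℂ) × ℂ))

/-- The alternating form encoding the structure constants of `s(θ)`. -/
def omega (θ : ℝ) (x y : (Fin 4 → ℂ) × ℂ) : ℂ :=
  ((x.1 0 * y.1 1 - x.1 1 * y.1 0) + (x.1 2 * y.1 3 - x.1 3 * y.1 2)) +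
    (Real.cos (2 * θ) : ℂ) *
      ((x.1 0 * y.1 3 - x.1 3 * y.1 0) + (x.1 2 * y.1 1 - x.1 1 * y.1 2)) +
    (-Complex.I * (Real.sin (2 * θ) : ℂ)) *
      ((x.1 0 * y.1 2 - x.1 2 * y.1 0) + (x.1 3 * y.1 1 - x.1 1 * y.1 3))

/-- The bracket of `s(θ)`: it takes values in the central line spanned by `v`. -/
def br (θ : ℝ) (x y : (Fin 4 → ℂ) × ℂ) : (Fin 4 → ℂ) × ℂ := ((0 : Fin 4 → ℂ), omega θ x y)

lemma br_add_left (x y z : (Fin 4 → ℂ) × ℂ) : br θ (x + y) z = br θ x z + br θ y z := by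
  simp only [br, omega, Prod.mk_add_mk, Prod.fst_add, Pi.add_apply, Prod.mk.injEq]
  constructor
  · simp
  · ring

lemma br_add_right (x y z : (Fin 4 → ℂ) × ℂ) : br θ x (y + z) = br θ x y + br θ x z := by
  simp only [br, omega, Prod.mk_add_mk, Prod.fst_add, Pi.add_apply, Prod.mk.injEq]
  constructor
  · simp
  · ring

lemma br_self (x : (Fin 4 → ℂ) × ℂ) : br θ x x = 0 := by
  simp only [br, omega]
  have h : (0 : (Fin 4 → ℂ) × ℂ) = ((0 : Fin 4 → ℂ), (0 : ℂ)) := rfl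
  rw [h, Prod.mk.injEq]
  constructor
  · rfl
  · ring

lemma br_leibniz (x y z : (Fin 4 → ℂ) × ℂ) :
    br θ x (br θ y z) = br θ (br θ x y) z + br θ y (br θ x z) := by
  simp only [br, omega, Prod.mk_add_mk, Pi.zero_apply, Prod.mk.injEq]
  constructor
  · simp
  · ring

lemma br_smul (c : ℂ) (x y : (Fin 4 → ℂ) × ℂ) : br θ x (c • y) = c • br θ x y := by
  simp only [br, omega, Prod.smul_mk, Prod.smul_fst, Pi.smul_apply, smul_eq_mul, smul_zero]
  rw [Prod.mk.injEq]
  constructor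
  · rfl
  · ring

instance : LieRing (SwAlg θ) where
  bracket x y := br θ x y
  add_lie x y z := br_add_left x y z
  lie_add x y z := br_add_right x y z
  lie_self x := br_self x
  leibniz_lie x y z := br_leibniz x y z

instance : LieAlgebra ℂ (SwAlg θ) where
  lie_smul c x y := br_smul c x y

/-- The basis vector `v₁`. -/
def v1 : SwAlg θ := ((Pi.single 0 1 : Fin 4 → ℂ), (0 : ℂ))
/-- The basis vector `v₂`. -/
def v2 : SwAlg θ := ((Pi.single 1 1 : Fin 4 → ℂ), (0 : ℂ))
/-- The basis vector `v₃`. -/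
def v3 : SwAlg θ := ((Pi.single 2 1 : Fin 4 → ℂ), (0 : ℂ))
/-- The basis vector `v₄`. -/
def v4 : SwAlg θ := ((Pi.single 3 1 : Fin 4 → ℂ), (0 : ℂ))
/-- The central basis vector `v`. -/
def vv : SwAlg θ := ((0 : Fin 4 → ℂ), (1 : ℂ))

end SwAlg

/-!
The Heisenberg Lie algebra `h(m)` over a commutative ring `R`: the
`(2m+1)`-dimensional Lie algebra with basis `v₁, ..., v_{2m}, v`, whose only
nonzero brackets among basis elements are `[v_{2i-1}, v_{2i}] = v = -[v_{2i}, v_{2i-1}]`.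
An element is encoded as `((p, q), t)` where `p i` is the coordinate along
`v_{2i-1}` (for `i = 1, ..., m`), `q i` is the coordinate along `v_{2i}`, and
`t` is the coordinate along the central element `v`.
-/

/-- The underlying module of the Heisenberg algebra `h(m)` over `R`. -/
def Heis (R : Type*) [CommRing R] (m : ℕ) : Type _ := ((Fin m → R) × (Fin m → R)) × R

namespace Heis

variable {R : Type*} [CommRing R] {m : ℕ}

instance : AddCommGroup (Heis R m) :=
  inferInstanceAs (AddCommGroup (((Fin m → R) × (Fin m → R)) × R))
instance : Module R (Heis R m) :=
  inferInstanceAs (Module R (((Fin m → R) × (Fin m → R)) × R))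

/-- The standard symplectic form encoding the structure constants of `h(m)`. -/
def omega (x y : ((Fin m → R) × (Fin m → R)) × R) : R :=
  ∑ i : Fin m, (x.1.1 i * y.1.2 i - x.1.2 i * y.1.1 i)

/-- The bracket of `h(m)`: it takes values in the central line spanned by `v`. -/
def br (x y : ((Fin m → R) × (Fin m → R)) × R) : ((Fin m → R) × (Fin m → R)) × R :=
  (0, omega x y)

lemma br_add_left (x y z : ((Fin m → R) × (Fin m → R)) × R) :
    br (x + y) z = br x z + br y z := by
  simp only [br, Prod.mk_add_mk, add_zero, Prod.mk.injEq, zero_add]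
  refine ⟨by simp, ?_⟩
  simp only [omega, ← Finset.sum_add_distrib, Prod.fst_add, Prod.snd_add, Pi.add_apply]
  exact Finset.sum_congr rfl fun i _ => by ring

lemma br_add_right (x y z : ((Fin m → R) × (Fin m → R)) × R) :
    br x (y + z) = br x y + br x z := by
  simp only [br, Prod.mk_add_mk, add_zero, Prod.mk.injEq, zero_add]
  refine ⟨by simp, ?_⟩
  simp only [omega, ← Finset.sum_add_distrib, Prod.fst_add, Prod.snd_add, Pi.add_apply]
  exact Finset.sum_congr rfl fun i _ => by ring

lemma omega_br_right (x y z : ((Fin m → R) × (Fin m → R)) × R) :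
    omega x (br y z) = 0 := by
  simp [omega, br]

lemma omega_br_left (x y z : ((Fin m → R) × (Fin m → R)) × R) :
    omega (br x y) z = 0 := by
  simp [omega, br]

lemma br_self (x : ((Fin m → R) × (Fin m → R)) × R) : br x x = 0 := by
  have h : omega x x = 0 := Finset.sum_eq_zero fun i _ => by ring
  simp [br, h, Prod.ext_iff]

lemma br_leibniz (x y z : ((Fin m → R) × (Fin m → R)) × R) :
    br x (br y z) = br (br x y) z + br y (br x z) := by
  show ((0, omega x (br y z)) : ((Fin m → R) × (Fin m → R)) × R) =
    (0, omega (br x y) z) + (0, omega y (br x z))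
  rw [omega_br_right, omega_br_left, omega_br_right]
  simp

lemma br_smul (c : R) (x y : ((Fin m → R) × (Fin m → R)) × R) :
    br x (c • y) = c • br x y := by
  have h : omega x (c • y) = c * omega x y := by
    simp only [omega, Finset.mul_sum, Prod.smul_fst, Prod.smul_snd, Pi.smul_apply, smul_eq_mul]
    exact Finset.sum_congr rfl fun i _ => by ring
  simp [br, h, Prod.ext_iff, smul_eq_mul]

instance : LieRing (Heis R m) where
  bracket x y := br x y
  add_lie x y z := br_add_left x y z
  lie_add x y z := br_add_right x y z
  lie_self x := br_self x
  leibniz_lie x y z := br_leibniz x y z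

instance : LieAlgebra R (Heis R m) where
  lie_smul c x y := br_smul c x y

/-- The basis vector `v_{2i-1}` of `h(m)`. -/
def vodd (i : Fin m) : Heis R m := (((Pi.single i 1 : Fin m → R), 0), 0)

/-- The basis vector `v_{2i}` of `h(m)`. -/
def veven (i : Fin m) : Heis R m := (((0 : Fin m → R), (Pi.single i 1 : Fin m → R)), 0)

/-- The central basis vector `v` of `h(m)`. -/
def vz : Heis R m := ((0, 0), 1)

end Heis

/-!
The form defining the bracket of `s(θ)` on `span {v₁, v₂, v₃, v₄}` has Pfaffian
`1 - cos² 2θ - sin² 2θ = 0`, so it is degenerate and its kernel adds a second central direction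
to `v`. The centre of `h(m)`, by contrast, is the line through the central basis vector, and a
Lie algebra isomorphism maps centre onto centre.
-/

open LieAlgebra LieModule

lemma LieEquiv.map_mem_center {R L L' : Type*} [CommRing R] [LieRing L] [LieAlgebra R L]
    [LieRing L'] [LieAlgebra R L'] (e : L ≃ₗ⁅R⁆ L') {x : L} (hx : x ∈ center R L) :
    e x ∈ center R L' := by
  rw [mem_maxTrivSubmodule] at hx ⊢
  intro y
  rw [← e.apply_symm_apply y, ← e.map_lie, hx, map_zero]

namespace Heis

variable {R : Type*} [CommRing R] {m : ℕ}

lemma lie_eq_zero_iff (x y : Heis R m) : ⁅x, y⁆ = 0 ↔ omega x y = 0 := by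
  change (((0, 0), omega x y) : ((Fin m → R) × (Fin m → R)) × R) = ((0, 0), 0) ↔ _
  simp

lemma omega_vodd_left (i : Fin m) (w : Heis R m) : omega (vodd i) w = w.1.2 i := by
  simp [omega, vodd, Pi.single_apply]

lemma omega_veven_left (i : Fin m) (w : Heis R m) : omega (veven i) w = -w.1.1 i := by
  simp [omega, veven, Pi.single_apply]

lemma eq_smul_vz_of_mem_center {w : Heis R m} (hw : w ∈ center R (Heis R m)) :
    w = w.2 • vz := by
  rw [mem_maxTrivSubmodule] at hw
  have hodd (i : Fin m) : w.1.2 i = 0 := by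
    simpa [lie_eq_zero_iff, omega_vodd_left] using hw (vodd i)
  have heven (i : Fin m) : w.1.1 i = 0 := by
    simpa [lie_eq_zero_iff, omega_veven_left] using hw (veven i)
  refine Prod.ext (Prod.ext (funext fun i => ?_) (funext fun i => ?_)) (mul_one _).symm
  · exact (heven i).trans (mul_zero _).symm
  · exact (hodd i).trans (mul_zero _).symm

lemma not_linearIndependent_of_mem_center [Nontrivial R] {x y : Heis R m}
    (hx : x ∈ center R (Heis R m)) (hy : y ∈ center R (Heis R m)) :
    ¬ LinearIndependent R ![x, y] := by
  intro hind
  obtain ⟨a, rfl⟩ : ∃ a : R, x = a • vz := ⟨_, eq_smul_vz_of_mem_center hx⟩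
  obtain ⟨b, rfl⟩ : ∃ b : R, y = b • vz := ⟨_, eq_smul_vz_of_mem_center hy⟩
  have hdep : b • a • vz + (-a) • b • (vz : Heis R m) = 0 := by
    rw [smul_smul, smul_smul, ← add_smul, show b * a + -a * b = 0 by ring, zero_smul]
  obtain ⟨-, ha⟩ := LinearIndependent.pair_iff.mp hind _ _ hdep
  apply hind.ne_zero 0
  rw [Matrix.cons_val_zero, neg_eq_zero.mp ha, zero_smul]

end Heis

namespace SwAlg

variable {θ : ℝ}

def kerVec (θ : ℝ) : SwAlg θ :=
  (![-(Real.cos (2 * θ) : ℂ), Complex.I * (Real.sin (2 * θ) : ℂ), 1, 0], 0)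

lemma lie_eq_zero_iff (x y : SwAlg θ) : ⁅x, y⁆ = 0 ↔ omega θ x y = 0 := by
  change ((0, omega θ x y) : (Fin 4 → ℂ) × ℂ) = (0, 0) ↔ _
  simp

lemma kerVec_mem_center : kerVec θ ∈ center ℂ (SwAlg θ) := by
  rw [mem_maxTrivSubmodule]
  intro y
  have htrig : (Real.cos (2 * θ) : ℂ) ^ 2 + (Real.sin (2 * θ) : ℂ) ^ 2 = 1 := by
    exact_mod_cast Real.cos_sq_add_sin_sq (2 * θ)
  rw [lie_eq_zero_iff]
  simp only [omega, kerVec, Matrix.cons_val]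
  linear_combination (-y.1 3 * (Real.sin (2 * θ) : ℂ) ^ 2) * Complex.I_sq + y.1 3 * htrig

lemma vv_mem_center : (vv : SwAlg θ) ∈ center ℂ (SwAlg θ) := by
  rw [mem_maxTrivSubmodule]
  intro y
  rw [lie_eq_zero_iff]
  simp [omega, vv]

lemma linearIndependent_kerVec_vv : LinearIndependent ℂ ![kerVec θ, (vv : SwAlg θ)] := by
  rw [LinearIndependent.pair_iff]
  intro s t hst
  have hv₃ : s * 1 + t * 0 = 0 := congrArg (fun x : SwAlg θ => x.1 2) hst
  have hv : s * 0 + t * 1 = 0 := congrArg (fun x : SwAlg θ => x.2) hst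
  exact ⟨by linear_combination hv₃, by linear_combination hv⟩

end SwAlg

theorem swanson_not_iso_heisenberg_general (θ : ℝ) :
    IsEmpty (SwAlg θ ≃ₗ⁅ℂ⁆ Heis ℂ 2) := by
  refine ⟨fun e => ?_⟩
  have hind : LinearIndependent ℂ ![e (SwAlg.kerVec θ), e SwAlg.vv] := by
    have := SwAlg.linearIndependent_kerVec_vv.map' e.toLinearEquiv.toLinearMap
      e.toLinearEquiv.ker
    rwa [← FinVec.map_eq] at this
  exact Heis.not_linearIndependent_of_mem_center (e.map_mem_center SwAlg.kerVec_mem_center)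
    (e.map_mem_center SwAlg.vv_mem_center) hind

/-- For `θ ∈ (−π/4, π/4)`, `θ ≠ 0`, the Lie algebra `s(θ)` is not
isomorphic, as a complex Lie algebra, to the Heisenberg Lie algebra `h(2)`. -/
theorem swanson_not_iso_heisenberg (θ : ℝ) (hθ₁ : -(Real.pi / 4) < θ)
    (hθ₂ : θ < Real.pi / 4) (hθ₀ : θ ≠ 0) :
    IsEmpty (SwAlg θ ≃ₗ⁅ℂ⁆ Heis ℂ 2) :=
  swanson_not_iso_heisenberg_general θ
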